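/- Let A = Aᵀ ∈ ℝ^{n×n} have all entries ≤ −1 with minimum entry A_min, and consider the 3-player adversarial team game with adversary utility u(x,y,z) = ⟨x, A y⟩ + (|A_min|/ε) Σᵢ (z_i(x_i − y_i) + z_{n+i}(y_i − x_i)) + z_{2n+1}|A_min|. If (x*, y*, z*) is an ε²-Nash equilibrium with ε ≤ 1/10, then (y*, y*) is a symmetric (21n+1)|A_min|ε-Nash equilibrium of the two-player identical-payoff symmetric game (A, A): for all y' ∈ Δⁿ, ⟨y*, A y*⟩ ≤ ⟨y', A y*⟩ + (21n+1)|A_min|ε. -/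

import Mathlib

open Matrix Finset

/-- Adversary index set: `2n` "comparison" actions plus one extra action. -/
abbrev AdvIdx (n : ℕ) := (Fin n ⊕ Fin n) ⊕ Unit

/-- Utility of the adversary in the 3-player adversarial team game. -/
noncomputable def advUtil {n : ℕ} (A : Matrix (Fin n) (Fin n) ℝ) (Amin ε : ℝ)
    (x y : Fin n → ℝ) (z : AdvIdx n → ℝ) : ℝ :=
  x ⬝ᵥ A.mulVec y
    + (|Amin| / ε) * ∑ i : Fin n,
        (z (Sum.inl (Sum.inl i)) * (x i - y i) + z (Sum.inl (Sum.inr i)) * (y i - x i))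
    + z (Sum.inr ()) * |Amin|

/-!
Every entry of `A` lies in `[Amin, -1]`, so `|Amin|` bounds `|⟨u, A w⟩ - ⟨v, A w⟩|` by
`|Amin| ‖u - v‖₁` for `w` in the simplex. Against the team deviation `x' = ys`, which caps the
equilibrium penalty term, the adversary's pure comparison actions `i` and `n + i` may gain at
most `ε²`; this forces `|xs i - ys i| ≤ 4ε`. The penalty is linear in `x - y`, so the penalties
of the two team deviations `x' = y'` and `y' = y'` add up to the equilibrium one, which the
adversary's last action keeps above `-ε²`; adding both deviations gives
`2⟨xs, A ys⟩ ≤ ⟨y', A ys⟩ + ⟨xs, A y'⟩ + 3ε²`. Finally, by symmetry of `A`, replacing `xs` by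
`ys` costs at most `4n|Amin|ε` in each term.
-/

section Bilinear

variable {m n : Type*} [Fintype n] {A : Matrix m n ℝ} {M : ℝ}

theorem abs_mulVec_apply_le (hA : ∀ i j, |A i j| ≤ M) {w : n → ℝ}
    (hw : w ∈ stdSimplex ℝ n) (i : m) : |(A *ᵥ w) i| ≤ M :=
  calc |(A *ᵥ w) i| = |∑ j, w j * A i j| := by simp only [mulVec, dotProduct, mul_comm]
    _ ≤ ∑ j, w j * |A i j| := by
        refine (abs_sum_le_sum_abs _ _).trans_eq (sum_congr rfl fun j _ => ?_)
        rw [abs_mul, abs_of_nonneg (hw.1 j)]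
    _ ≤ ∑ j, w j * M := sum_le_sum fun j _ => mul_le_mul_of_nonneg_left (hA i j) (hw.1 j)
    _ = M := by rw [← sum_mul, hw.2, one_mul]

theorem abs_sub_dotProduct_mulVec_le [Fintype m] (hA : ∀ i j, |A i j| ≤ M) {w : n → ℝ}
    (hw : w ∈ stdSimplex ℝ n) (x y : m → ℝ) :
    |x ⬝ᵥ A *ᵥ w - y ⬝ᵥ A *ᵥ w| ≤ M * ∑ i, |x i - y i| :=
  calc |x ⬝ᵥ A *ᵥ w - y ⬝ᵥ A *ᵥ w| = |∑ i, (x i - y i) * (A *ᵥ w) i| := by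
        rw [← sub_dotProduct]; rfl
    _ ≤ ∑ i, |x i - y i| * |(A *ᵥ w) i| := by
        simpa only [abs_mul] using
          abs_sum_le_sum_abs (fun i => (x i - y i) * (A *ᵥ w) i) univ
    _ ≤ ∑ i, |x i - y i| * M := sum_le_sum fun i _ =>
        mul_le_mul_of_nonneg_left (abs_mulVec_apply_le hA hw i) (abs_nonneg _)
    _ = M * ∑ i, |x i - y i| := by rw [← sum_mul, mul_comm]

end Bilinear

theorem sum_abs_sub_le_two {ι : Type*} [Fintype ι] {x y : ι → ℝ} (hx : x ∈ stdSimplex ℝ ι)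
    (hy : y ∈ stdSimplex ℝ ι) : ∑ i, |x i - y i| ≤ 2 :=
  calc ∑ i, |x i - y i| ≤ ∑ i, (x i + y i) := sum_le_sum fun i _ =>
        abs_sub_le_iff.2 ⟨by linarith [hy.1 i], by linarith [hx.1 i]⟩
    _ = 2 := by rw [sum_add_distrib, hx.2, hy.2]; norm_num

theorem dotProduct_mulVec_comm {n : Type*} [Fintype n] {A : Matrix n n ℝ} (hA : A.IsSymm)
    (x y : n → ℝ) : x ⬝ᵥ A *ᵥ y = y ⬝ᵥ A *ᵥ x := by
  rw [dotProduct_mulVec, ← mulVec_transpose, hA, dotProduct_comm]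

section TeamGame

variable {n : ℕ} {A : Matrix (Fin n) (Fin n) ℝ} {Amin ε : ℝ}

@[simp]
theorem advUtil_self (x : Fin n → ℝ) (z : AdvIdx n → ℝ) :
    advUtil A Amin ε x x z = x ⬝ᵥ A *ᵥ x + z (.inr ()) * |Amin| := by
  simp [advUtil]

theorem advUtil_add_advUtil (x w y : Fin n → ℝ) (z : AdvIdx n → ℝ) :
    advUtil A Amin ε x w z + advUtil A Amin ε w y z =
      x ⬝ᵥ A *ᵥ w + w ⬝ᵥ A *ᵥ y + (advUtil A Amin ε x y z - x ⬝ᵥ A *ᵥ y)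
        + z (.inr ()) * |Amin| := by
  have penalty_add :
      ∑ i, (z (.inl (.inl i)) * (x i - w i) + z (.inl (.inr i)) * (w i - x i))
        + ∑ i, (z (.inl (.inl i)) * (w i - y i) + z (.inl (.inr i)) * (y i - w i))
        = ∑ i, (z (.inl (.inl i)) * (x i - y i) + z (.inl (.inr i)) * (y i - x i)) := by
    rw [← sum_add_distrib]
    exact sum_congr rfl fun i _ => by ring
  simp only [advUtil]
  linear_combination (|Amin| / ε) * penalty_add

@[simp]
theorem advUtil_single_inr (x y : Fin n → ℝ) :
    advUtil A Amin ε x y (Pi.single (.inr ()) 1) = x ⬝ᵥ A *ᵥ y + |Amin| := by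
  simp [advUtil]

@[simp]
theorem advUtil_single_inl_inl (x y : Fin n → ℝ) (i : Fin n) :
    advUtil A Amin ε x y (Pi.single (.inl (.inl i)) 1) =
      x ⬝ᵥ A *ᵥ y + |Amin| / ε * (x i - y i) := by
  simp [advUtil, Pi.single_apply]

@[simp]
theorem advUtil_single_inl_inr (x y : Fin n → ℝ) (i : Fin n) :
    advUtil A Amin ε x y (Pi.single (.inl (.inr i)) 1) =
      x ⬝ᵥ A *ᵥ y + |Amin| / ε * (y i - x i) := by
  simp [advUtil, Pi.single_apply]

section Equilibrium

variable {xs ys : Fin n → ℝ} {zs : AdvIdx n → ℝ}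

theorem abs_sub_le_of_isNash (hA : ∀ i j, |A i j| ≤ |Amin|) (hε : 0 < ε)
    (hεA : 2 * ε ^ 2 ≤ |Amin|) (hxs : xs ∈ stdSimplex ℝ (Fin n))
    (hys : ys ∈ stdSimplex ℝ (Fin n)) (hzs : zs ∈ stdSimplex ℝ (AdvIdx n))
    (hNashx : ∀ x' ∈ stdSimplex ℝ (Fin n),
      advUtil A Amin ε xs ys zs ≤ advUtil A Amin ε x' ys zs + ε ^ 2)
    (hNashz : ∀ z' ∈ stdSimplex ℝ (AdvIdx n),
      advUtil A Amin ε xs ys z' ≤ advUtil A Amin ε xs ys zs + ε ^ 2) (i : Fin n) :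
    |xs i - ys i| ≤ 4 * ε := by
  have hM : 0 < |Amin| := (by positivity : 0 < 2 * ε ^ 2).trans_le hεA
  have hx := hNashx ys hys
  rw [advUtil_self] at hx
  have hgap : ys ⬝ᵥ A *ᵥ ys - xs ⬝ᵥ A *ᵥ ys ≤ |Amin| * 2 :=
    (le_abs_self _).trans <| (abs_sub_dotProduct_mulVec_le hA hys ys xs).trans <|
      mul_le_mul_of_nonneg_left (sum_abs_sub_le_two hys hxs) hM.le
  have hzl : zs (.inr ()) * |Amin| ≤ |Amin| :=
    mul_le_of_le_one_left hM.le (mem_Icc_of_mem_stdSimplex hzs _).2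
  have bound : ∀ d, xs ⬝ᵥ A *ᵥ ys + |Amin| / ε * d ≤ advUtil A Amin ε xs ys zs + ε ^ 2 →
      d ≤ 4 * ε := by
    intro d hd
    have : |Amin| / ε * d ≤ |Amin| * 4 := by linarith
    rw [div_mul_eq_mul_div, div_le_iff₀ hε, mul_assoc] at this
    exact le_of_mul_le_mul_left this hM
  refine abs_sub_le_iff.2 ⟨bound _ ?_, bound _ ?_⟩
  · simpa using hNashz _ (single_mem_stdSimplex ℝ (.inl (.inl i)))
  · simpa using hNashz _ (single_mem_stdSimplex ℝ (.inl (.inr i)))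

theorem two_mul_dotProduct_mulVec_le_of_isNash (hzs : zs ∈ stdSimplex ℝ (AdvIdx n))
    (hNashx : ∀ x' ∈ stdSimplex ℝ (Fin n),
      advUtil A Amin ε xs ys zs ≤ advUtil A Amin ε x' ys zs + ε ^ 2)
    (hNashy : ∀ y' ∈ stdSimplex ℝ (Fin n),
      advUtil A Amin ε xs ys zs ≤ advUtil A Amin ε xs y' zs + ε ^ 2)
    (hNashz : ∀ z' ∈ stdSimplex ℝ (AdvIdx n),
      advUtil A Amin ε xs ys z' ≤ advUtil A Amin ε xs ys zs + ε ^ 2)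
    {y' : Fin n → ℝ} (hy' : y' ∈ stdSimplex ℝ (Fin n)) :
    2 * (xs ⬝ᵥ A *ᵥ ys) ≤ y' ⬝ᵥ A *ᵥ ys + xs ⬝ᵥ A *ᵥ y' + 3 * ε ^ 2 := by
  have hx := hNashx y' hy'
  have hy := hNashy y' hy'
  have hz := hNashz _ (single_mem_stdSimplex ℝ (.inr ()))
  rw [advUtil_single_inr] at hz
  have hsplit := advUtil_add_advUtil (A := A) (Amin := Amin) (ε := ε) xs y' ys zs
  have hzl : zs (.inr ()) * |Amin| ≤ |Amin| :=
    mul_le_of_le_one_left (abs_nonneg _) (mem_Icc_of_mem_stdSimplex hzs _).2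
  linarith

end Equilibrium

end TeamGame

theorem stmt_5 {n : ℕ} (A : Matrix (Fin n) (Fin n) ℝ) (hsym : A.IsSymm)
    (hentries : ∀ i j, A i j ≤ -1)
    (Amin : ℝ) (hAmin : IsLeast {r : ℝ | ∃ i j, A i j = r} Amin)
    (ε : ℝ) (hε : 0 < ε) (hε10 : ε ≤ 1 / 10)
    (xs ys : Fin n → ℝ) (zs : AdvIdx n → ℝ)
    (hxs : xs ∈ stdSimplex ℝ (Fin n)) (hys : ys ∈ stdSimplex ℝ (Fin n))
    (hzs : zs ∈ stdSimplex ℝ (AdvIdx n))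
    (hNashx : ∀ x' ∈ stdSimplex ℝ (Fin n),
      advUtil A Amin ε xs ys zs ≤ advUtil A Amin ε x' ys zs + ε ^ 2)
    (hNashy : ∀ y' ∈ stdSimplex ℝ (Fin n),
      advUtil A Amin ε xs ys zs ≤ advUtil A Amin ε xs y' zs + ε ^ 2)
    (hNashz : ∀ z' ∈ stdSimplex ℝ (AdvIdx n),
      advUtil A Amin ε xs ys z' ≤ advUtil A Amin ε xs ys zs + ε ^ 2) :
    ∀ y' ∈ stdSimplex ℝ (Fin n),
      ys ⬝ᵥ A.mulVec ys ≤ y' ⬝ᵥ A.mulVec ys + (21 * n + 1) * |Amin| * ε := by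
  intro y' hy'
  obtain ⟨i₀, j₀, hAmin₀⟩ := hAmin.1
  have hM : 1 ≤ |Amin| := by
    rw [abs_of_neg (by linarith [hentries i₀ j₀])]; linarith [hentries i₀ j₀]
  have hA : ∀ i j, |A i j| ≤ |Amin| := fun i j => by
    rw [abs_of_neg (by linarith [hentries i j]), abs_of_neg (by linarith [hentries i₀ j₀])]
    linarith [hAmin.2 ⟨i, j, rfl⟩]
  have hεA : 2 * ε ^ 2 ≤ |Amin| := by nlinarith
  have hclose : ∑ i, |xs i - ys i| ≤ n * (4 * ε) :=
    (sum_le_sum fun i _ => abs_sub_le_of_isNash hA hε hεA hxs hys hzs hNashx hNashz i).trans_eq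
      (by simp)
  have hE₁ := (abs_le.1 (abs_sub_dotProduct_mulVec_le hA hys xs ys)).1
  have hE₂ := (abs_le.1 (abs_sub_dotProduct_mulVec_le hA hy' xs ys)).2
  have hteam := two_mul_dotProduct_mulVec_le_of_isNash hzs hNashx hNashy hNashz hy'
  rw [dotProduct_mulVec_comm hsym ys y'] at hE₂
  have hdev : |Amin| * ∑ i, |xs i - ys i| ≤ |Amin| * (n * (4 * ε)) :=
    mul_le_mul_of_nonneg_left hclose (abs_nonneg _)
  have hsq : 3 * ε ^ 2 ≤ 2 * |Amin| * ε := by nlinarith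
  have hnonneg : 0 ≤ n * |Amin| * ε := by positivity
  linarith
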